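/- arXiv:1705.05268 — 3 statements merged into one kernel-verified Lean document; each statement's English description precedes it below -/
import Mathlib

section
/- Let v ≥ 2, k ≥ 0 and d ≥ 0 be integers, and let Λ be a finite subgroup of (ℝ/ℤ)^{d+1} having δ-polynomial 1 + t^{k+1} + t^{2(k+1)} + ⋯ + t^{(v−1)(k+1)}. Then d ≥ v(k+1) − 1. -/
open scoped BigOperators

local instance : Fact ((0:ℝ) < 1) := ⟨one_pos⟩

noncomputable def fracR (x : AddCircle (1:ℝ)) : ℝ :=
  ((AddCircle.equivIco 1 0) x : ℝ)

noncomputable def ht {ι : Type*} [Fintype ι] (x : ι → AddCircle (1:ℝ)) : ℝ :=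
  ∑ i, fracR (x i)

/-- `Λ` has δ-polynomial `1 + t^step + t^(2*step) + ⋯ + t^((v-1)*step)` :
the height map is a bijection from `Λ` onto `{j*step : 0 ≤ j ≤ v-1}`. -/
def HasDeltaPoly {ι : Type*} [Fintype ι] (v step : ℕ)
    (Λ : Set (ι → AddCircle (1:ℝ))) : Prop :=
  Set.BijOn ht Λ {y : ℝ | ∃ j : ℕ, j < v ∧ y = (j : ℝ) * (step : ℝ)}

def NonPyramidal {ι : Type*} [Fintype ι] (Λ : Set (ι → AddCircle (1:ℝ))) : Prop :=
  ∀ i : ι, ∃ x ∈ Λ, x i ≠ 0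

lemma fracR_coe (x : ℝ) : fracR (x : AddCircle (1:ℝ)) = Int.fract x := by
  have := AddCircle.coe_equivIco_mk_apply (1:ℝ) x
  simpa [fracR] using this

lemma fracR_nonneg (y : AddCircle (1:ℝ)) : 0 ≤ fracR y := by
  induction y using QuotientAddGroup.induction_on with
  | H x => rw [fracR_coe]; exact Int.fract_nonneg x

lemma fracR_eq_zero_iff (y : AddCircle (1:ℝ)) : fracR y = 0 ↔ y = 0 := by
  induction y using QuotientAddGroup.induction_on with
  | H x =>
    rw [fracR_coe]
    constructor
    · intro h
      have hx : x = (⌊x⌋ : ℝ) := by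
        have := Int.self_sub_floor x
        rw [h] at this
        linarith
      rw [hx]
      exact (AddCircle.coe_eq_zero_iff 1).2 ⟨⌊x⌋, by simp⟩
    · intro h
      rcases (AddCircle.coe_eq_zero_iff 1).1 h with ⟨n, hn⟩
      rw [← hn]; simp

lemma fracR_add_neg_le (y : AddCircle (1:ℝ)) : fracR y + fracR (-y) ≤ 1 := by
  induction y using QuotientAddGroup.induction_on with
  | H x =>
    rw [← AddCircle.coe_neg, fracR_coe, fracR_coe]
    by_cases h : Int.fract x = 0
    · have h2 : Int.fract (-x) = 0 := Int.fract_neg_eq_zero.2 h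
      rw [h, h2]; norm_num
    · rw [Int.fract_neg h]; ring_nf; linarith

theorem stmt_1 (v k d : ℕ) (hv : 2 ≤ v)
    (Λ : AddSubgroup (Fin (d+1) → AddCircle (1:ℝ)))
    (hfin : (Λ : Set (Fin (d+1) → AddCircle (1:ℝ))).Finite)
    (hΛ : HasDeltaPoly v (k+1) (Λ : Set (Fin (d+1) → AddCircle (1:ℝ)))) :
    v * (k+1) - 1 ≤ d := by
  -- find λ with max height
  obtain ⟨l, hlΛ, hl⟩ := hΛ.surjOn ⟨v - 1, by omega, rfl⟩
  -- ht of -l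
  have hnegΛ : -l ∈ (Λ : Set (Fin (d+1) → AddCircle (1:ℝ))) := neg_mem hlΛ
  obtain ⟨j, hjv, hj⟩ := hΛ.mapsTo hnegΛ
  have hl0 : l ≠ 0 := by
    intro h
    have : ht l = 0 := by
      simp [ht, h, Pi.zero_apply, (fracR_eq_zero_iff 0).2 rfl]
    rw [hl] at this
    have : ((v-1:ℕ):ℝ) * ((k+1:ℕ):ℝ) = 0 := this
    have h1 : (1:ℝ) ≤ ((v-1:ℕ):ℝ) := by exact_mod_cast Nat.one_le_iff_ne_zero.2 (by omega)
    have h2 : (1:ℝ) ≤ ((k+1:ℕ):ℝ) := by exact_mod_cast Nat.le_add_left 1 k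
    nlinarith
  have hj0 : j ≠ 0 := by
    rintro rfl
    simp only [Nat.cast_zero, zero_mul] at hj
    have : ∀ i, fracR ((-l) i) = 0 := by
      intro i
      have hsum : ∑ i, fracR ((-l) i) = 0 := hj
      have := (Finset.sum_eq_zero_iff_of_nonneg (fun i _ => fracR_nonneg ((-l) i))).1 hsum
      exact this i (Finset.mem_univ i)
    apply hl0
    have : -l = 0 := funext fun i => (fracR_eq_zero_iff _).1 (this i)
    simpa [neg_eq_zero] using this
  have hsum : ht l + ht (-l) ≤ (d+1 : ℝ) := by
    rw [ht, ht, ← Finset.sum_add_distrib]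
    calc ∑ i : Fin (d+1), (fracR (l i) + fracR ((-l) i))
        ≤ ∑ _i : Fin (d+1), (1:ℝ) := by
          apply Finset.sum_le_sum
          intro i _
          simpa using fracR_add_neg_le (l i)
      _ = (d+1 : ℝ) := by simp
  rw [hl, hj] at hsum
  have h1 : (1:ℝ) ≤ (j:ℝ) := by exact_mod_cast Nat.one_le_iff_ne_zero.2 hj0
  have hv1 : ((v-1:ℕ):ℝ) = (v:ℝ) - 1 := by
    have : (v:ℝ) - 1 = ((v-1:ℕ):ℝ) := by push_cast [Nat.cast_sub (by omega : 1 ≤ v)]; ring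
    linarith
  have hk : ((k+1:ℕ):ℝ) = (k:ℝ) + 1 := by push_cast; ring
  rw [hv1, hk] at hsum
  have : (v:ℝ) * ((k:ℝ)+1) ≤ (d:ℝ) + 1 := by nlinarith [h1, hsum]
  have : (v * (k+1) : ℕ) ≤ d + 1 := by exact_mod_cast (by push_cast; linarith : ((v*(k+1):ℕ):ℝ) ≤ ((d+1:ℕ):ℝ))
  omega
end

section
/- Let v₁, v₂ ≥ 1 and k ≥ 0 be integers. Let Λ₁ be a finite subgroup of (ℝ/ℤ)^{d₁+1} such that ht is a bijection from Λ₁ onto {j(k+1) : j = 0,1,…,v₁−1}, and let Λ₂ be a finite subgroup of (ℝ/ℤ)^{d₂+1} such that ht is a bijection from Λ₂ onto {j·v₁(k+1) : j = 0,1,…,v₂−1}. Let Λ = {(x, y) ∈ (ℝ/ℤ)^{d₁+d₂+2} : x ∈ Λ₁, y ∈ Λ₂} be the product subgroup of (ℝ/ℤ)^{d₁+d₂+2}. Then ht is a bijection from Λ onto {j(k+1) : j = 0,1,…,v₁v₂−1}, i.e., Λ has δ-polynomial 1 + t^{k+1} + t^{2(k+1)} + ⋯ + t^{(v₁v₂−1)(k+1)}.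 Moreover, if Λ₁ and Λ₂ are both non-pyramidal, then Λ is non-pyramidal. -/
open scoped BigOperators

lemma ht_append {m n : ℕ} (x : Fin m → AddCircle (1:ℝ)) (y : Fin n → AddCircle (1:ℝ)) :
    ht (Fin.append x y) = ht x + ht y := by
  unfold ht
  rw [Fin.sum_univ_add]
  simp [Fin.append_left, Fin.append_right]

theorem stmt_5 (v₁ v₂ k d₁ d₂ : ℕ) (hv₁ : 1 ≤ v₁) (hv₂ : 1 ≤ v₂)
    (Λ₁ : AddSubgroup (Fin (d₁+1) → AddCircle (1:ℝ)))
    (Λ₂ : AddSubgroup (Fin (d₂+1) → AddCircle (1:ℝ)))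
    (hfin₁ : (Λ₁ : Set (Fin (d₁+1) → AddCircle (1:ℝ))).Finite)
    (hfin₂ : (Λ₂ : Set (Fin (d₂+1) → AddCircle (1:ℝ))).Finite)
    (h₁ : HasDeltaPoly v₁ (k+1) (Λ₁ : Set (Fin (d₁+1) → AddCircle (1:ℝ))))
    (h₂ : HasDeltaPoly v₂ (v₁*(k+1)) (Λ₂ : Set (Fin (d₂+1) → AddCircle (1:ℝ)))) :
    HasDeltaPoly (v₁*v₂) (k+1)
      {z : Fin ((d₁+1)+(d₂+1)) → AddCircle (1:ℝ) |
        ∃ x ∈ Λ₁, ∃ y ∈ Λ₂, z = Fin.append x y} ∧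
    (NonPyramidal (Λ₁ : Set (Fin (d₁+1) → AddCircle (1:ℝ))) →
      NonPyramidal (Λ₂ : Set (Fin (d₂+1) → AddCircle (1:ℝ))) →
      NonPyramidal {z : Fin ((d₁+1)+(d₂+1)) → AddCircle (1:ℝ) |
        ∃ x ∈ Λ₁, ∃ y ∈ Λ₂, z = Fin.append x y}) := by
  constructor
  · refine ⟨?_, ?_, ?_⟩
    · rintro z ⟨x, hx, y, hy, rfl⟩
      obtain ⟨j₁, hj₁, he₁⟩ := h₁.mapsTo hx
      obtain ⟨j₂, hj₂, he₂⟩ := h₂.mapsTo hy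
      refine ⟨j₁ + j₂ * v₁, ?_, ?_⟩
      · calc j₁ + j₂ * v₁ < v₁ + j₂ * v₁ := by omega
          _ = (j₂ + 1) * v₁ := by ring
          _ ≤ v₂ * v₁ := Nat.mul_le_mul_right _ (by omega)
          _ = v₁ * v₂ := Nat.mul_comm _ _
      · rw [ht_append, he₁, he₂]; push_cast; ring
    · rintro z ⟨x, hx, y, hy, rfl⟩ z' ⟨x', hx', y', hy', rfl⟩ he
      rw [ht_append, ht_append] at he
      obtain ⟨j₁, hj₁, he₁⟩ := h₁.mapsTo hx
      obtain ⟨j₂, hj₂, he₂⟩ := h₂.mapsTo hy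
      obtain ⟨j₁', hj₁', he₁'⟩ := h₁.mapsTo hx'
      obtain ⟨j₂', hj₂', he₂'⟩ := h₂.mapsTo hy'
      rw [he₁, he₂, he₁', he₂'] at he
      have hnat : j₁ + j₂ * v₁ = j₁' + j₂' * v₁ := by
        have hk : ((k:ℝ)+1) ≠ 0 := by positivity
        have h2 : ((j₁ + j₂ * v₁ : ℕ) : ℝ) * ((k:ℝ)+1) = ((j₁' + j₂' * v₁ : ℕ) : ℝ) * ((k:ℝ)+1) := by
          push_cast; push_cast at he; linarith [he]
        have h3 := mul_right_cancel₀ hk h2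
        exact_mod_cast h3
      have hj : j₁ = j₁' ∧ j₂ = j₂' := by
        have e1 : j₁ = (j₁ + j₂ * v₁) % v₁ := by
          rw [Nat.add_mul_mod_self_right, Nat.mod_eq_of_lt hj₁]
        have e1' : j₁' = (j₁' + j₂' * v₁) % v₁ := by
          rw [Nat.add_mul_mod_self_right, Nat.mod_eq_of_lt hj₁']
        have e2 : j₂ = (j₁ + j₂ * v₁) / v₁ := by
          rw [Nat.add_mul_div_right _ _ (by omega : 0 < v₁), Nat.div_eq_of_lt hj₁]; omega
        have e2' : j₂' = (j₁' + j₂' * v₁) / v₁ := by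
          rw [Nat.add_mul_div_right _ _ (by omega : 0 < v₁), Nat.div_eq_of_lt hj₁']; omega
        exact ⟨by rw [e1, hnat, ← e1'], by rw [e2, hnat, ← e2']⟩
      have hxx : x = x' := h₁.injOn hx hx' (by rw [he₁, he₁', hj.1])
      have hyy : y = y' := h₂.injOn hy hy' (by rw [he₂, he₂', hj.2])
      rw [hxx, hyy]
    · rintro w ⟨j, hj, rfl⟩
      have hj₁ : j % v₁ < v₁ := Nat.mod_lt _ hv₁
      have hj₂ : j / v₁ < v₂ := Nat.div_lt_of_lt_mul hj
      obtain ⟨x, hx, he₁⟩ := h₁.surjOn ⟨j % v₁, hj₁, rfl⟩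
      obtain ⟨y, hy, he₂⟩ := h₂.surjOn ⟨j / v₁, hj₂, rfl⟩
      refine ⟨Fin.append x y, ⟨x, hx, y, hy, rfl⟩, ?_⟩
      rw [ht_append, he₁, he₂]
      have hsum : j % v₁ + j / v₁ * v₁ = j := Nat.mod_add_div' j v₁
      have hs : ((j % v₁ : ℕ) : ℝ) + ((j / v₁ : ℕ) : ℝ) * (v₁ : ℝ) = (j : ℝ) := by
        exact_mod_cast congrArg (Nat.cast : ℕ → ℝ) hsum
      push_cast
      linear_combination ((k:ℝ)+1) * hs
  · intro hp₁ hp₂ i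
    refine Fin.addCases (motive := fun i => ∃ z ∈ {z : Fin ((d₁+1)+(d₂+1)) → AddCircle (1:ℝ) |
        ∃ x ∈ Λ₁, ∃ y ∈ Λ₂, z = Fin.append x y}, z i ≠ 0) ?_ ?_ i
    · intro i₁
      obtain ⟨x, hx, hne⟩ := hp₁ i₁
      exact ⟨Fin.append x 0, ⟨x, hx, 0, Λ₂.zero_mem, rfl⟩, by rwa [Fin.append_left]⟩
    · intro i₂
      obtain ⟨y, hy, hne⟩ := hp₂ i₂
      exact ⟨Fin.append 0 y, ⟨0, Λ₁.zero_mem, y, hy, rfl⟩, by rwa [Fin.append_right]⟩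
end

section
/- Let P(i) denote the product of the i smallest prime numbers (the i-th primorial, with P(0) = 1). Then for every integer t ≥ 1, C(P(t)) = Σ_{i=0}^{t−1} binom(t, i) · C(P(i)); that is, the sequence a(t) = C(P(t)) satisfies a(0) = 1 and the recursion a(t) = Σ_{i=0}^{t−1} binom(t,i) a(i) defining the ordered Bell (Fubini) numbers. -/
open scoped BigOperators

/-- The number of finite sets `S` of positive integers such that every element of `S`
divides `v` and is greater than `1`, `S` is totally ordered by divisibility, and
`v ∈ S` whenever `v > 1`.  (The number of chains from a non-least element to the
greatest element in the divisor lattice of `v`.) -/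
def C (v : ℕ) : ℕ :=
  ((Nat.divisors v).powerset.filter
    (fun S : Finset ℕ =>
      (∀ n ∈ S, n ∣ v ∧ 1 < n) ∧
      (∀ a ∈ S, ∀ b ∈ S, a ∣ b ∨ b ∣ a) ∧
      (1 < v → v ∈ S))).card
/-- The `i`-th primorial: the product of the `i` smallest prime numbers. -/
noncomputable def primorialProd (i : ℕ) : ℕ :=
  ∏ j ∈ Finset.range i, Nat.nth Nat.Prime j

/-!
Removing the top element `v` from a chain of divisors of `v` leaves a chain ending at its lcm,
a proper divisor of `v`; hence `C v = ∑ C d` over the proper divisors `d` of `v` when `v > 1`.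
For squarefree `n` the divisors correspond to the subsets of the prime factors, so by strong
induction on the number `k` of prime factors, `C n` depends only on `k`, and grouping the proper
divisors by their number of prime factors turns the divisor recursion into the binomial one.
-/

open Finset

namespace Nat

theorem lcm_mem_of_dvd_chain {S : Finset ℕ} (hS : S.Nonempty) (hpos : ∀ n ∈ S, 0 < n)
    (hchain : ∀ a ∈ S, ∀ b ∈ S, a ∣ b ∨ b ∣ a) : S.lcm id ∈ S := by
  set m := S.max' hS
  have hm : m ∈ S := S.max'_mem hS
  have hdvd : ∀ n ∈ S, n ∣ m := fun n hn =>
    (hchain n hn m hm).elim id fun h =>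
      le_antisymm (S.le_max' n hn) (le_of_dvd (hpos n hn) h) ▸ dvd_rfl
  rwa [dvd_antisymm (Finset.lcm_dvd (f := id) hdvd) (Finset.dvd_lcm hm)]

theorem sum_divisors_eq_sum_choose {M : Type*} [AddCommMonoid M] {n : ℕ} (hn : Squarefree n)
    (g : ℕ → M) :
    ∑ d ∈ n.divisors, g #d.primeFactors =
      ∑ j ∈ range (#n.primeFactors + 1), (#n.primeFactors).choose j • g j := by
  rw [← sum_powerset_apply_card]
  refine sum_nbij' primeFactors (fun A => ∏ p ∈ A, p) ?_ ?_ ?_ ?_ fun _ _ => rfl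
  · intro d hd
    exact mem_powerset.2 (primeFactors_mono (dvd_of_mem_divisors hd) hn.ne_zero)
  · intro A hA
    refine mem_divisors.2 ⟨?_, hn.ne_zero⟩
    calc ∏ p ∈ A, p ∣ ∏ p ∈ n.primeFactors, p :=
          prod_dvd_prod_of_subset _ _ _ (mem_powerset.1 hA)
      _ = n := prod_primeFactors_of_squarefree hn
  · intro d hd
    exact prod_primeFactors_of_squarefree (hn.squarefree_of_dvd (dvd_of_mem_divisors hd))
  · intro A hA
    exact primeFactors_prod fun p hp => prime_of_mem_primeFactors (mem_powerset.1 hA hp)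

theorem sum_properDivisors_eq_sum_choose {M : Type*} [AddCancelCommMonoid M] {n : ℕ}
    (hn : Squarefree n) (g : ℕ → M) :
    ∑ d ∈ n.properDivisors, g #d.primeFactors =
      ∑ j ∈ range #n.primeFactors, (#n.primeFactors).choose j • g j := by
  have h := sum_divisors_eq_sum_choose hn g
  rwa [← cons_self_properDivisors hn.ne_zero, sum_cons, sum_range_succ, choose_self,
    one_smul, add_comm, add_right_cancel_iff] at h

theorem card_primeFactors_lt_of_mem_properDivisors {n d : ℕ} (hn : Squarefree n)
    (hd : d ∈ n.properDivisors) : #d.primeFactors < #n.primeFactors := by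
  obtain ⟨hdn, hlt⟩ := mem_properDivisors.1 hd
  refine card_lt_card ((primeFactors_mono hdn hn.ne_zero).ssubset_of_ne fun h => hlt.ne ?_)
  rw [← prod_primeFactors_of_squarefree (hn.squarefree_of_dvd hdn), h,
    prod_primeFactors_of_squarefree hn]

theorem nth_prime_injective : Function.Injective (nth Prime) :=
  nth_injective infinite_setOfPred_prime

end Nat

def divisorChains (v : ℕ) : Finset (Finset ℕ) :=
  (Nat.divisors v).powerset.filter fun S =>
    (∀ n ∈ S, n ∣ v ∧ 1 < n) ∧ (∀ a ∈ S, ∀ b ∈ S, a ∣ b ∨ b ∣ a) ∧ (1 < v → v ∈ S)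

theorem C_eq_card_divisorChains (v : ℕ) : C v = #(divisorChains v) := rfl

theorem mem_divisorChains {v : ℕ} (hv : v ≠ 0) {S : Finset ℕ} :
    S ∈ divisorChains v ↔
      (∀ n ∈ S, n ∣ v ∧ 1 < n) ∧ (∀ a ∈ S, ∀ b ∈ S, a ∣ b ∨ b ∣ a) ∧ (1 < v → v ∈ S) := by
  simp only [divisorChains, mem_filter, mem_powerset, and_iff_right_iff_imp]
  exact fun h _ hn => Nat.mem_divisors.2 ⟨(h.1 _ hn).1, hv⟩

theorem lcm_eq_of_mem_divisorChains {d : ℕ} (hd : d ≠ 0) {S : Finset ℕ}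
    (hS : S ∈ divisorChains d) : S.lcm id = d := by
  obtain ⟨hmem, -, htop⟩ := (mem_divisorChains hd).1 hS
  rcases (Nat.one_le_iff_ne_zero.2 hd).lt_or_eq with h1 | rfl
  · exact Nat.dvd_antisymm (Finset.lcm_dvd (f := id) fun n hn => (hmem n hn).1)
      (Finset.dvd_lcm (htop h1))
  · rw [eq_empty_of_forall_notMem fun n hn =>
      (hmem n hn).2.not_ge (Nat.le_of_dvd one_pos (hmem n hn).1), lcm_empty]

theorem mem_divisorChains_lcm {S : Finset ℕ} (h1 : ∀ n ∈ S, 1 < n)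
    (hchain : ∀ a ∈ S, ∀ b ∈ S, a ∣ b ∨ b ∣ a) : S ∈ divisorChains (S.lcm id) := by
  have hpos : ∀ n ∈ S, 0 < n := fun n hn => (h1 n hn).pos
  have hlcm0 : S.lcm id ≠ 0 := lcm_eq_zero_iff.not.2 fun ⟨n, hn, h0⟩ => (hpos n hn).ne' h0
  rw [mem_divisorChains hlcm0]
  refine ⟨fun n hn => ⟨Finset.dvd_lcm hn, h1 n hn⟩, hchain, fun hlcm => ?_⟩
  refine Nat.lcm_mem_of_dvd_chain (nonempty_iff_ne_empty.2 ?_) hpos hchain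
  rintro rfl
  exact hlcm.ne' lcm_empty

theorem insert_mem_divisorChains {v d : ℕ} (hv : 1 < v) (hd : d ∈ v.properDivisors)
    {S : Finset ℕ} (hS : S ∈ divisorChains d) : insert v S ∈ divisorChains v := by
  obtain ⟨hdv, -⟩ := Nat.mem_properDivisors.1 hd
  obtain ⟨hmem, hchain, -⟩ := (mem_divisorChains (Nat.pos_of_mem_properDivisors hd).ne').1 hS
  rw [mem_divisorChains (by omega)]
  refine ⟨?_, ?_, fun _ => mem_insert_self v S⟩
  · simp only [forall_mem_insert]
    exact ⟨⟨dvd_rfl, hv⟩, fun n hn => ⟨(hmem n hn).1.trans hdv, (hmem n hn).2⟩⟩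
  · simp only [forall_mem_insert]
    refine ⟨⟨Or.inl dvd_rfl, fun b hb => Or.inr ((hmem b hb).1.trans hdv)⟩, fun a ha =>
      ⟨Or.inl ((hmem a ha).1.trans hdv), hchain a ha⟩⟩

theorem lcm_erase_mem_properDivisors {v : ℕ} (hv : 1 < v) {T : Finset ℕ}
    (hT : T ∈ divisorChains v) : (T.erase v).lcm id ∈ v.properDivisors := by
  obtain ⟨hmem, hchain, -⟩ := (mem_divisorChains (by omega)).1 hT
  have hdvd : (T.erase v).lcm id ∣ v :=
    Finset.lcm_dvd fun n hn => (hmem n (mem_of_mem_erase hn)).1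
  refine Nat.mem_properDivisors.2 ⟨hdvd, (Nat.le_of_dvd (by omega) hdvd).lt_of_ne fun h => ?_⟩
  have hlcm := mem_divisorChains_lcm (S := T.erase v)
    (fun n hn => (hmem n (mem_of_mem_erase hn)).2)
    fun a ha b hb => hchain a (mem_of_mem_erase ha) b (mem_of_mem_erase hb)
  rw [h] at hlcm
  exact notMem_erase v T (((mem_divisorChains (by omega)).1 hlcm).2.2 hv)

theorem C_eq_sum_properDivisors {v : ℕ} (hv : 1 < v) : C v = ∑ d ∈ v.properDivisors, C d := by
  simp only [C_eq_card_divisorChains, ← card_sigma]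
  refine card_nbij' (fun T => ⟨(T.erase v).lcm id, T.erase v⟩) (fun p => insert v p.2)
    ?_ ?_ ?_ ?_
  · intro T hT
    obtain ⟨hmem, hchain, -⟩ := (mem_divisorChains (by omega)).1 hT
    exact mem_sigma.2 ⟨lcm_erase_mem_properDivisors hv hT,
      mem_divisorChains_lcm (fun n hn => (hmem n (mem_of_mem_erase hn)).2)
        fun a ha b hb => hchain a (mem_of_mem_erase ha) b (mem_of_mem_erase hb)⟩
  · rintro ⟨d, S⟩ hS
    obtain ⟨hd, hS⟩ := mem_sigma.1 hS
    exact insert_mem_divisorChains hv hd hS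
  · intro T hT
    exact insert_erase (((mem_divisorChains (by omega)).1 hT).2.2 hv)
  · rintro ⟨d, S⟩ hS
    obtain ⟨hd, hS⟩ := mem_sigma.1 hS
    have hd0 : d ≠ 0 := (Nat.pos_of_mem_properDivisors hd).ne'
    have hvS : v ∉ S := fun h => (Nat.le_of_dvd (Nat.pos_of_ne_zero hd0)
      (((mem_divisorChains hd0).1 hS).1 v h).1).not_gt (Nat.mem_properDivisors.1 hd).2
    simp only [erase_insert hvS, lcm_eq_of_mem_divisorChains hd0 hS]

theorem primorialProd_eq_prod_image (t : ℕ) :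
    primorialProd t = ∏ p ∈ (range t).image (Nat.nth Nat.Prime), p :=
  (prod_image (f := id) fun _ _ _ _ h => Nat.nth_prime_injective h).symm

theorem primeFactors_primorialProd (t : ℕ) :
    (primorialProd t).primeFactors = (range t).image (Nat.nth Nat.Prime) := by
  rw [primorialProd_eq_prod_image]
  exact Nat.primeFactors_prod fun p hp => by
    obtain ⟨j, -, rfl⟩ := mem_image.1 hp
    exact Nat.prime_nth_prime j

theorem card_primeFactors_primorialProd (t : ℕ) : #(primorialProd t).primeFactors = t := by
  rw [primeFactors_primorialProd,
    card_image_of_injective _ Nat.nth_prime_injective, card_range]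

theorem squarefree_primorialProd (t : ℕ) : Squarefree (primorialProd t) := by
  refine squarefree_prod_of_pairwise_isCoprime (fun i _ j _ hij => ?_)
    fun j _ => (Nat.prime_nth_prime j).squarefree
  rw [Function.onFun, ← Nat.coprime_iff_isRelPrime, Nat.coprime_primes (Nat.prime_nth_prime i)
    (Nat.prime_nth_prime j)]
  exact Nat.nth_prime_injective.ne hij

theorem C_eq_sum_choose_of_squarefree {n : ℕ} (hn : Squarefree n) (h1 : 1 < n)
    (hdiv : ∀ d ∈ n.properDivisors, C d = C (primorialProd #d.primeFactors)) :
    C n = ∑ j ∈ range #n.primeFactors, (#n.primeFactors).choose j * C (primorialProd j) := by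
  rw [C_eq_sum_properDivisors h1, sum_congr rfl hdiv,
    Nat.sum_properDivisors_eq_sum_choose hn fun j => C (primorialProd j)]
  simp only [smul_eq_mul]

theorem C_eq_C_primorialProd {n : ℕ} (hn : Squarefree n) :
    C n = C (primorialProd #n.primeFactors) := by
  induction hk : #n.primeFactors using Nat.strong_induction_on generalizing n with
  | _ k ih =>
  have hdiv : ∀ {m : ℕ}, Squarefree m → #m.primeFactors = k →
      ∀ d ∈ m.properDivisors, C d = C (primorialProd #d.primeFactors) := fun hm hmk d hd =>
    ih _ (hmk ▸ Nat.card_primeFactors_lt_of_mem_properDivisors hm hd)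
      (hm.squarefree_of_dvd (Nat.mem_properDivisors.1 hd).1) rfl
  rcases Nat.eq_zero_or_pos k with rfl | hk0
  · obtain rfl : n = 1 :=
      (Nat.primeFactors_eq_empty.1 (card_eq_zero.1 hk)).resolve_left hn.ne_zero
    rfl
  · have hPk := card_primeFactors_primorialProd k
    have one_lt {m : ℕ} (hm : #m.primeFactors = k) : 1 < m :=
      Nat.nonempty_primeFactors.1 (card_pos.1 (hm ▸ hk0))
    rw [C_eq_sum_choose_of_squarefree hn (one_lt hk) (hdiv hn hk),
      C_eq_sum_choose_of_squarefree (squarefree_primorialProd k) (one_lt hPk)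
        (hdiv (squarefree_primorialProd k) hPk), hk, hPk]

theorem stmt_15 :
    C (primorialProd 0) = 1 ∧
    ∀ t : ℕ, 1 ≤ t →
      C (primorialProd t) = ∑ i ∈ Finset.range t, Nat.choose t i * C (primorialProd i) := by
  refine ⟨rfl, fun t ht => ?_⟩
  have hsq := squarefree_primorialProd t
  have h1 : 1 < primorialProd t := by
    rw [← Nat.nonempty_primeFactors, ← card_pos, card_primeFactors_primorialProd]
    exact ht
  have h := C_eq_sum_choose_of_squarefree hsq h1 fun d hd =>
    C_eq_C_primorialProd (hsq.squarefree_of_dvd (Nat.mem_properDivisors.1 hd).1)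
  rwa [card_primeFactors_primorialProd] at h
end
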